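/- arXiv:1807.04369 — 8 statements merged into one kernel-verified Lean document; each statement's English description precedes it below -/
import Mathlib

section
/- Assume E[S²(X)] = (k/2)·σ². Then the expected unbiased sample variance after one draw-and-discard update step, averaged over the uniformly random drawn index j and the uniformly random discarded index u, is unchanged: (1/k²)·Σ_{j ∈ Fin k} Σ_{u ∈ Fin k} E[S²(Function.update X u (X j + r))] = (k/2)·σ². -/
open MeasureTheory ProbabilityTheory

/-- Sample mean of a vector of `k` reals. -/
noncomputable def sampleMean (k : ℕ) (Y : Fin k → ℝ) : ℝ :=
  (1 / (k : ℝ)) * ∑ i, Y i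

/-- Unbiased sample variance of a vector of `k` reals. -/
noncomputable def sampleVar (k : ℕ) (Y : Fin k → ℝ) : ℝ :=
  (1 / ((k : ℝ) - 1)) * ∑ i, (Y i - sampleMean k Y) ^ 2

lemma sum_quad {k : ℕ} (x : Fin k → ℝ) (C D E : ℝ) :
    ∑ u : Fin k, (C + D * x u + E * (x u) ^ 2)
      = (k : ℝ) * C + D * (∑ u, x u) + E * (∑ u, (x u) ^ 2) := by
  rw [Finset.sum_add_distrib, Finset.sum_add_distrib, Finset.sum_const, ← Finset.mul_sum,
    ← Finset.mul_sum, Finset.card_univ, Fintype.card_fin, nsmul_eq_mul]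

lemma sum_update_g {k : ℕ} (x : Fin k → ℝ) (u : Fin k) (v : ℝ) (g : ℝ → ℝ) :
    ∑ i, g (Function.update x u v i) = (∑ i, g (x i)) + g v - g (x u) := by
  have h : ∀ i : Fin k, g (Function.update x u v i)
      = Function.update (fun i => g (x i)) u (g v) i := by
    intro i
    by_cases hi : i = u
    · subst hi; simp
    · simp [Function.update_of_ne hi]
  rw [Finset.sum_congr rfl fun i _ => h i,
    Finset.sum_update_of_mem (Finset.mem_univ u),
    Finset.sum_sdiff_eq_sub (Finset.singleton_subset_iff.2 (Finset.mem_univ u)),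
    Finset.sum_singleton]
  ring

lemma sampleVar_eq {k : ℕ} (hk0 : (k : ℝ) ≠ 0) (y : Fin k → ℝ) :
    sampleVar k y
      = (1 / ((k : ℝ) - 1)) * ((∑ i, (y i) ^ 2) - (1 / (k : ℝ)) * (∑ i, y i) ^ 2) := by
  unfold sampleVar sampleMean
  congr 1
  have h : ∀ i : Fin k, (y i - 1 / (k : ℝ) * ∑ i, y i) ^ 2
      = ((1 / (k : ℝ) * ∑ i, y i) ^ 2) + (-(2 / (k : ℝ)) * ∑ i, y i) * y i
        + 1 * (y i) ^ 2 := fun i => by ring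
  rw [Finset.sum_congr rfl fun i _ => h i, sum_quad]
  field_simp
  ring

lemma key_identity {k : ℕ} (hk : 2 ≤ k) (x : Fin k → ℝ) (s : ℝ) :
    ∑ j : Fin k, ∑ u : Fin k, sampleVar k (Function.update x u (x j + s))
      = ((k : ℝ) ^ 2 - 2) * sampleVar k x + (k : ℝ) * s ^ 2 := by
  have hk0 : (k : ℝ) ≠ 0 := by positivity
  have hk2 : (2 : ℝ) ≤ (k : ℝ) := by exact_mod_cast hk
  have hk1 : (k : ℝ) - 1 ≠ 0 := by linarith
  set T := ∑ i, x i with hT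
  set Q := ∑ i, (x i) ^ 2 with hQ
  set κ := 1 / ((k : ℝ) - 1) with hκ
  set ι := 1 / (k : ℝ) with hι
  have hupd : ∀ (u : Fin k) (v : ℝ), sampleVar k (Function.update x u v)
      = κ * ((Q - (x u) ^ 2 + v ^ 2) - ι * (T - x u + v) ^ 2) := by
    intro u v
    rw [sampleVar_eq hk0, sum_update_g x u v (fun t => t ^ 2), sum_update_g x u v (fun t => t),
      hκ, hι, hT, hQ]
    ring
  have inner : ∀ j : Fin k,
      ∑ u : Fin k, sampleVar k (Function.update x u (x j + s))
        = (k : ℝ) * (κ * (Q + (x j + s) ^ 2 - ι * (T + (x j + s)) ^ 2))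
          + (κ * (2 * ι * (T + (x j + s)))) * T + (κ * (-1 - ι)) * Q := by
    intro j
    have h : ∀ u : Fin k, sampleVar k (Function.update x u (x j + s))
        = (κ * (Q + (x j + s) ^ 2 - ι * (T + (x j + s)) ^ 2))
          + (κ * (2 * ι * (T + (x j + s)))) * x u + (κ * (-1 - ι)) * (x u) ^ 2 := by
      intro u
      rw [hupd u (x j + s)]
      ring
    rw [Finset.sum_congr rfl fun u _ => h u, sum_quad]
  have outer : ∀ j : Fin k,
      (k : ℝ) * (κ * (Q + (x j + s) ^ 2 - ι * (T + (x j + s)) ^ 2))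
          + (κ * (2 * ι * (T + (x j + s)))) * T + (κ * (-1 - ι)) * Q
        = (κ * ((k : ℝ) * Q - Q + ((k : ℝ) - ι * (k : ℝ)) * s ^ 2
              - ι * ((k : ℝ) * T ^ 2 - 2 * T ^ 2 + Q)
              - ι * (2 * (k : ℝ) * T - 2 * T) * s))
          + (κ * (2 * s * ((k : ℝ) - ι * (k : ℝ)) - ι * (2 * (k : ℝ) * T - 2 * T))) * x j
          + (κ * ((k : ℝ) - ι * (k : ℝ))) * (x j) ^ 2 := by
    intro j
    ring
  rw [Finset.sum_congr rfl fun j _ => (inner j).trans (outer j), sum_quad,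
    sampleVar_eq hk0, ← hT, ← hQ, hκ, hι]
  field_simp
  ring

lemma integrable_sampleVar {Ω : Type*} [MeasurableSpace Ω] {μ : Measure Ω} {k : ℕ}
    (Y : Fin k → Ω → ℝ) (hY : ∀ i, MemLp (Y i) 2 μ) :
    Integrable (fun ω => sampleVar k (fun i => Y i ω)) μ := by
  unfold sampleVar sampleMean
  apply Integrable.const_mul
  apply integrable_finset_sum
  intro i _
  have hM := (memLp_finset_sum' Finset.univ (fun j (_ : j ∈ Finset.univ) => hY j)).const_mul
    (1 / (k : ℝ))
  have hM' : MemLp (fun ω => 1 / (k : ℝ) * ∑ j, Y j ω) 2 μ := by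
    simpa [Finset.sum_apply] using hM
  exact ((hY i).sub hM').integrable_sq

/-- The expected unbiased sample variance after one draw-and-discard update step,
averaged over the uniformly random drawn index `j` and discarded index `u`,
is unchanged. -/
theorem ddml_variance_stabilizing
    {Ω : Type*} [MeasurableSpace Ω] {μ : Measure Ω} [IsProbabilityMeasure μ]
    (k : ℕ) (hk : 2 ≤ k)
    (X : Fin k → Ω → ℝ) (r : Ω → ℝ) (σ : ℝ)
    (hX : ∀ i, MemLp (X i) 2 μ) (hr : MemLp r 2 μ)
    (hindep : IndepFun (fun ω => fun i => X i ω) r μ)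
    (hmean : ∫ ω, r ω ∂μ = 0)
    (hvar : ∫ ω, (r ω) ^ 2 ∂μ = σ ^ 2)
    (hS : ∫ ω, sampleVar k (fun i => X i ω) ∂μ = ((k : ℝ) / 2) * σ ^ 2) :
    (1 / (k : ℝ) ^ 2) *
        ∑ j : Fin k, ∑ u : Fin k,
          ∫ ω, sampleVar k (Function.update (fun i => X i ω) u (X j ω + r ω)) ∂μ
      = ((k : ℝ) / 2) * σ ^ 2 := by
  have hk0 : (k : ℝ) ≠ 0 := by positivity
  have hint : ∀ j u : Fin k,
      Integrable (fun ω => sampleVar k (Function.update (fun i => X i ω) u (X j ω + r ω))) μ := by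
    intro j u
    have hY : ∀ i, MemLp (Function.update X u (fun ω => X j ω + r ω) i) 2 μ := by
      intro i
      by_cases hi : i = u
      · subst hi; simp; exact (hX j).add hr
      · simpa [Function.update_of_ne hi] using hX i
    have h := integrable_sampleVar _ hY
    convert h using 2 with ω
    congr 1
    funext i
    by_cases hi : i = u
    · subst hi; simp
    · simp [Function.update_of_ne hi]
  have hswap : ∑ j : Fin k, ∑ u : Fin k,
      ∫ ω, sampleVar k (Function.update (fun i => X i ω) u (X j ω + r ω)) ∂μ
        = ∫ ω, ∑ j : Fin k, ∑ u : Fin k,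
            sampleVar k (Function.update (fun i => X i ω) u (X j ω + r ω)) ∂μ := by
    rw [integral_finset_sum _ fun j _ => integrable_finset_sum _ fun u _ => hint j u]
    exact Finset.sum_congr rfl fun j _ => (integral_finset_sum _ fun u _ => hint j u).symm
  rw [hswap]
  have hpt : ∀ ω, ∑ j : Fin k, ∑ u : Fin k,
      sampleVar k (Function.update (fun i => X i ω) u (X j ω + r ω))
        = ((k : ℝ) ^ 2 - 2) * sampleVar k (fun i => X i ω) + (k : ℝ) * (r ω) ^ 2 := by
    intro ω
    exact key_identity hk (fun i => X i ω) (r ω)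
  rw [integral_congr_ae (Filter.Eventually.of_forall hpt)]
  rw [integral_add ((integrable_sampleVar X hX).const_mul _) (hr.integrable_sq.const_mul _),
    integral_const_mul, integral_const_mul, hS, hvar]
  field_simp
  ring
end

section
/- Assume E[S²(X)] = (k/2)·σ². Then for every fixed index j ∈ Fin k (the case where the drawn model instance replaces itself), E[S²(Function.update X j (X j + r))] = (k/2 + 1/k)·σ². -/
open MeasureTheory ProbabilityTheory

lemma sampleMean_update_self (k : ℕ) (hk : 2 ≤ k) (Y : Fin k → ℝ) (j : Fin k) (c : ℝ) :
    sampleMean k (Function.update Y j (Y j + c)) = sampleMean k Y + c / k := by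
  have hk0 : (k : ℝ) ≠ 0 := by
    have : (0:ℝ) < k := by exact_mod_cast Nat.lt_of_lt_of_le (by norm_num) hk
    linarith
  unfold sampleMean
  rw [Finset.sum_update_of_mem (Finset.mem_univ j)]
  rw [Finset.sdiff_singleton_eq_erase, Finset.sum_erase_eq_sub (Finset.mem_univ j)]
  field_simp
  ring

lemma sampleVar_update_self (k : ℕ) (hk : 2 ≤ k) (Y : Fin k → ℝ) (j : Fin k) (c : ℝ) :
    sampleVar k (Function.update Y j (Y j + c)) =
      sampleVar k Y + (2 / ((k : ℝ) - 1)) * (c * (Y j - sampleMean k Y)) + c ^ 2 / k := by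
  have hk0 : (k : ℝ) ≠ 0 := by
    have : (0:ℝ) < k := by exact_mod_cast Nat.lt_of_lt_of_le (by norm_num) hk
    linarith
  have hk1 : (k : ℝ) - 1 ≠ 0 := by
    have : (2:ℝ) ≤ k := by exact_mod_cast hk
    linarith
  set M := sampleMean k Y with hM
  have hsum : ∑ i, Y i = (k : ℝ) * M := by
    rw [hM]; unfold sampleMean; field_simp
  have h0 : ∑ i, (Y i - M) = 0 := by
    rw [Finset.sum_sub_distrib, Finset.sum_const, Finset.card_univ, Fintype.card_fin, hsum,
      nsmul_eq_mul]
    ring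
  unfold sampleVar
  rw [sampleMean_update_self k hk Y j c, ← hM]
  have happ : ∀ i, (Function.update Y j (Y j + c) i - (M + c / k)) ^ 2 =
      Function.update (fun i => (Y i - (M + c / k)) ^ 2) j ((Y j + c - (M + c / k)) ^ 2) i :=
    fun i => Function.apply_update (fun _ z => (z - (M + c / k)) ^ 2) Y j (Y j + c) i
  rw [Finset.sum_congr rfl (fun i _ => happ i), Finset.sum_update_of_mem (Finset.mem_univ j),
    Finset.sdiff_singleton_eq_erase, Finset.sum_erase_eq_sub (Finset.mem_univ j)]
  have hexp : ∑ i, (Y i - (M + c / k)) ^ 2 =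
      ∑ i, (Y i - M) ^ 2 - (2 * c / k) * ∑ i, (Y i - M) + (k : ℝ) * (c / k) ^ 2 := by
    rw [Finset.mul_sum]
    rw [show ((k : ℝ) * (c / k) ^ 2) = ∑ _i : Fin k, (c / k) ^ 2 by
      rw [Finset.sum_const, Finset.card_univ, Fintype.card_fin, nsmul_eq_mul]]
    rw [← Finset.sum_sub_distrib, ← Finset.sum_add_distrib]
    exact Finset.sum_congr rfl fun i _ => by ring
  rw [hexp, h0]
  field_simp
  ring

/-- When the drawn model instance replaces itself, the expected unbiased sample
variance increases from `(k/2)·σ²` to `(k/2 + 1/k)·σ²`. -/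
theorem ddml_variance_replace_self
    {Ω : Type*} [MeasurableSpace Ω] {μ : Measure Ω} [IsProbabilityMeasure μ]
    (k : ℕ) (hk : 2 ≤ k)
    (X : Fin k → Ω → ℝ) (r : Ω → ℝ) (σ : ℝ)
    (hX : ∀ i, MemLp (X i) 2 μ) (hr : MemLp r 2 μ)
    (hindep : IndepFun (fun ω => fun i => X i ω) r μ)
    (hmean : ∫ ω, r ω ∂μ = 0)
    (hvar : ∫ ω, (r ω) ^ 2 ∂μ = σ ^ 2)
    (hS : ∫ ω, sampleVar k (fun i => X i ω) ∂μ = ((k : ℝ) / 2) * σ ^ 2)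
    (j : Fin k) :
    ∫ ω, sampleVar k (Function.update (fun i => X i ω) j (X j ω + r ω)) ∂μ
      = ((k : ℝ) / 2 + 1 / (k : ℝ)) * σ ^ 2 := by
  have hk0 : (k : ℝ) ≠ 0 := by
    have : (0:ℝ) < k := by exact_mod_cast Nat.lt_of_lt_of_le (by norm_num) hk
    linarith
  have hk1 : (k : ℝ) - 1 ≠ 0 := by
    have : (2:ℝ) ≤ k := by exact_mod_cast hk
    linarith
  -- Memℒp of the sample mean of X
  have hMean : MemLp (fun ω => sampleMean k (fun i => X i ω)) 2 μ := by
    have hsum : MemLp (fun ω => ∑ i, X i ω) 2 μ := by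
      have := memLp_finset_sum (μ := μ) (s := (Finset.univ : Finset (Fin k)))
        (f := fun i ω => X i ω) (fun i _ => hX i)
      simpa using this
    simpa [sampleMean] using hsum.const_mul (1 / (k : ℝ))
  -- h ω = X j ω - sample mean
  set h : Ω → ℝ := fun ω => X j ω - sampleMean k (fun i => X i ω) with hh
  have hhL2 : MemLp h 2 μ := (hX j).sub hMean
  -- sampleVar of X is integrable
  have hVarInt : Integrable (fun ω => sampleVar k (fun i => X i ω)) μ := by
    have : ∀ i : Fin k, Integrable (fun ω => (X i ω - sampleMean k (fun l => X l ω)) ^ 2) μ :=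
      fun i => ((hX i).sub hMean).integrable_sq
    have hsum : Integrable (fun ω => ∑ i, (X i ω - sampleMean k (fun l => X l ω)) ^ 2) μ := by
      exact integrable_finset_sum _ fun i _ => this i
    simpa [sampleVar] using hsum.const_mul (1 / ((k : ℝ) - 1))
  -- independence of h and r
  have hindep' : IndepFun h r μ := by
    have hφ : Measurable (fun Y : Fin k → ℝ => Y j - sampleMean k Y) := by
      unfold sampleMean
      exact (measurable_pi_apply j).sub ((Finset.measurable_sum _
        (fun i _ => measurable_pi_apply i)).const_mul _)
    exact hindep.comp hφ measurable_id
  have hrInt : Integrable r μ := hr.integrable one_le_two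
  have hhInt : Integrable h μ := hhL2.integrable one_le_two
  have hrh : Integrable (fun ω => r ω * h ω) μ := by
    have := hindep'.symm.integrable_mul hrInt hhInt
    exact this
  have hr2 : Integrable (fun ω => (r ω) ^ 2) μ := hr.integrable_sq
  have hcross : ∫ ω, r ω * h ω ∂μ = 0 := by
    have := hindep'.symm.integral_mul_eq_mul_integral hr.aestronglyMeasurable hhL2.aestronglyMeasurable
    simpa [Pi.mul_apply, hmean] using this
  -- pointwise identity
  have hpt : ∀ ω, sampleVar k (Function.update (fun i => X i ω) j (X j ω + r ω)) =
      sampleVar k (fun i => X i ω) + (2 / ((k : ℝ) - 1)) * (r ω * h ω) + (r ω) ^ 2 / k := by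
    intro ω
    simpa [hh] using sampleVar_update_self k hk (fun i => X i ω) j (r ω)
  rw [integral_congr_ae (Filter.Eventually.of_forall hpt)]
  have h1 : Integrable (fun a => (sampleVar k fun i => X i a)
      + 2 / ((k : ℝ) - 1) * (r a * h a)) μ := hVarInt.add (hrh.const_mul _)
  have h2 : Integrable (fun a => (r a) ^ 2 / (k : ℝ)) μ := hr2.div_const _
  rw [integral_add h1 h2, integral_add hVarInt (hrh.const_mul _), MeasureTheory.integral_const_mul,
    integral_div, hS, hcross, hvar]
  field_simp
  ring
end

section
/- Assume E[S²(X)] = (k/2)·σ². Then, averaging over all ordered pairs of distinct indices (j, u) with j ≠ u (the case where the drawn model instance j replaces a different instance u), (1/(k(k−1)))·Σ_{(j,u), j ≠ u} E[S²(Function.update X u (X j + r))] = ((k³ − k² − 2)/(2k(k−1)))·σ², which equals (k/2 − 1/(k(k−1)))·σ². -/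
open MeasureTheory ProbabilityTheory

section Aux

variable {k : ℕ}

lemma ddml_sum_sq_helper (x : Fin k → ℝ) (t : ℝ) :
    ∑ u, (t - x u) ^ 2
      = (k : ℝ) * t ^ 2 - 2 * t * (∑ u, x u) + ∑ u, (x u) ^ 2 := by
  have h : ∀ u ∈ Finset.univ, (t - x u) ^ 2
      = t ^ 2 - (2 * t) * x u + (x u) ^ 2 := by intros; ring
  rw [Finset.sum_congr rfl h]
  rw [Finset.sum_add_distrib, Finset.sum_sub_distrib, ← Finset.mul_sum,
    Finset.sum_const, Finset.card_univ, Fintype.card_fin, nsmul_eq_mul]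

lemma ddml_sampleVar_eq (hk0 : (k : ℝ) ≠ 0) (y : Fin k → ℝ) :
    sampleVar k y
      = (1 / ((k : ℝ) - 1)) * ((∑ i, (y i) ^ 2) - (∑ i, y i) ^ 2 / k) := by
  unfold sampleVar sampleMean
  have h : ∀ i ∈ Finset.univ, (y i - (1 / (k : ℝ)) * ∑ i, y i) ^ 2
      = ((1 / (k : ℝ)) * (∑ i, y i) - y i) ^ 2 := by intros; ring
  rw [Finset.sum_congr rfl h, ddml_sum_sq_helper]
  congr 1
  field_simp
  ring

lemma ddml_sum_update (y : Fin k → ℝ) (u : Fin k) (v : ℝ) :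
    ∑ i, Function.update y u v i = (∑ i, y i) - y u + v := by
  have h := Finset.add_sum_erase Finset.univ y (Finset.mem_univ u)
  rw [Finset.sum_update_of_mem (Finset.mem_univ u), Finset.sdiff_singleton_eq_erase]
  linarith [h]

lemma ddml_sum_sq_update (y : Fin k → ℝ) (u : Fin k) (v : ℝ) :
    ∑ i, (Function.update y u v i) ^ 2 = (∑ i, (y i) ^ 2) - (y u) ^ 2 + v ^ 2 := by
  have h : ∀ i, (Function.update y u v i) ^ 2
      = Function.update (fun i => (y i) ^ 2) u (v ^ 2) i := by
    intro i
    by_cases hi : i = u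
    · subst hi; simp
    · simp [Function.update_of_ne hi]
  simp only [h]
  have h2 := Finset.add_sum_erase Finset.univ (fun i => (y i) ^ 2) (Finset.mem_univ u)
  rw [Finset.sum_update_of_mem (Finset.mem_univ u), Finset.sdiff_singleton_eq_erase]
  linarith [h2]

lemma ddml_sampleVar_update (hk0 : (k : ℝ) ≠ 0) (y : Fin k → ℝ) (u : Fin k) (v : ℝ) :
    sampleVar k (Function.update y u v)
      = (1 / ((k : ℝ) - 1)) * ((∑ i, (y i) ^ 2) - (y u) ^ 2 + v ^ 2
          - ((∑ i, y i) - y u + v) ^ 2 / k) := by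
  rw [ddml_sampleVar_eq hk0, ddml_sum_update, ddml_sum_sq_update]

lemma ddml_var_update_decomp (hk0 : (k : ℝ) ≠ 0) (hk1 : (k : ℝ) - 1 ≠ 0)
    (y : Fin k → ℝ) (u j : Fin k) (c : ℝ) :
    sampleVar k (Function.update y u (y j + c))
      = sampleVar k (Function.update y u (y j))
        + ((2 / ((k : ℝ) - 1)) * (y j - (1 / (k : ℝ)) * ((∑ i, y i) - y u + y j))) * c
        + c ^ 2 * (1 / (k : ℝ)) := by
  rw [ddml_sampleVar_update hk0, ddml_sampleVar_update hk0]
  field_simp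
  ring

lemma ddml_sum_pairs (hk0 : (k : ℝ) ≠ 0) (hk1 : (k : ℝ) - 1 ≠ 0) (x : Fin k → ℝ) :
    ∑ j : Fin k, ∑ u ∈ Finset.univ.erase j,
        sampleVar k (Function.update x u (x j))
      = ((k : ℝ) - 2) * ((k : ℝ) + 1) * sampleVar k x := by
  set A := ∑ i, x i with hA
  set B := ∑ i, (x i) ^ 2 with hB
  have hsum2 : ∀ t : ℝ, ∑ u, (t + x u) ^ 2 = (k : ℝ) * t ^ 2 + 2 * t * A + B := by
    intro t
    have h : ∀ u ∈ Finset.univ, (t + x u) ^ 2 = ((-t) - x u) ^ 2 := by intros; ring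
    rw [Finset.sum_congr rfl h, ddml_sum_sq_helper, ← hA, ← hB]; ring
  have herase : ∀ j : Fin k,
      ∑ u ∈ Finset.univ.erase j, sampleVar k (Function.update x u (x j))
        = (∑ u, sampleVar k (Function.update x u (x j))) - sampleVar k x := by
    intro j
    have h := Finset.add_sum_erase Finset.univ
      (fun u => sampleVar k (Function.update x u (x j))) (Finset.mem_univ j)
    simp only [Function.update_eq_self] at h
    linarith [h]
  have hinner : ∀ j : Fin k,
      ∑ u, sampleVar k (Function.update x u (x j))
        = (1 / ((k : ℝ) - 1)) * ((k : ℝ) * B - B + (k : ℝ) * (x j) ^ 2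
            - ((k : ℝ) * (A + x j) ^ 2 - 2 * (A + x j) * A + B) / k) := by
    intro j
    have h : ∀ u ∈ Finset.univ, sampleVar k (Function.update x u (x j))
        = (1 / ((k : ℝ) - 1)) * ((B + (x j) ^ 2 - (x u) ^ 2)
            - ((A + x j) - x u) ^ 2 / k) := by
      intro u _
      rw [ddml_sampleVar_update hk0, ← hA, ← hB]
      ring
    rw [Finset.sum_congr rfl h, ← Finset.mul_sum]
    congr 1
    rw [Finset.sum_sub_distrib, Finset.sum_sub_distrib, Finset.sum_const,
      Finset.card_univ, Fintype.card_fin, nsmul_eq_mul, ← Finset.sum_div,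
      ddml_sum_sq_helper, ← hA, ← hB]
    ring
  simp only [herase, hinner]
  rw [Finset.sum_sub_distrib, Finset.sum_const, Finset.card_univ, Fintype.card_fin,
    nsmul_eq_mul]
  have hexp : ∀ j ∈ Finset.univ,
      (1 / ((k : ℝ) - 1)) * ((k : ℝ) * B - B + (k : ℝ) * (x j) ^ 2
          - ((k : ℝ) * (A + x j) ^ 2 - 2 * (A + x j) * A + B) / k)
        = (1 / ((k : ℝ) - 1)) * ((k : ℝ) * B - B - ((k : ℝ) * A ^ 2 - 2 * A ^ 2 + B) / k)
          + ((1 / ((k : ℝ) - 1)) * ((2 * A - 2 * (k : ℝ) * A) / k)) * x j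
          + ((1 / ((k : ℝ) - 1)) * ((k : ℝ) - 1)) * (x j) ^ 2 := by
    intros; field_simp; ring
  rw [Finset.sum_congr rfl hexp, Finset.sum_add_distrib, Finset.sum_add_distrib,
    Finset.sum_const, Finset.card_univ, Fintype.card_fin, nsmul_eq_mul,
    ← Finset.mul_sum, ← Finset.mul_sum, ← hA, ← hB,
    ddml_sampleVar_eq hk0, ← hA, ← hB]
  field_simp
  ring

end Aux

/-- Averaging over all ordered pairs of distinct indices `(j, u)` (the drawn
instance `j` replaces a different instance `u`), the expected unbiased sample
variance after the update is `((k³ − k² − 2)/(2k(k−1)))·σ²`, which equals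
`(k/2 − 1/(k(k−1)))·σ²`. -/
theorem ddml_variance_replace_other
    {Ω : Type*} [MeasurableSpace Ω] {μ : Measure Ω} [IsProbabilityMeasure μ]
    (k : ℕ) (hk : 2 ≤ k)
    (X : Fin k → Ω → ℝ) (r : Ω → ℝ) (σ : ℝ)
    (hX : ∀ i, MemLp (X i) 2 μ) (hr : MemLp r 2 μ)
    (hindep : IndepFun (fun ω => fun i => X i ω) r μ)
    (hmean : ∫ ω, r ω ∂μ = 0)
    (hvar : ∫ ω, (r ω) ^ 2 ∂μ = σ ^ 2)
    (hS : ∫ ω, sampleVar k (fun i => X i ω) ∂μ = ((k : ℝ) / 2) * σ ^ 2) :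
    (1 / ((k : ℝ) * ((k : ℝ) - 1))) *
        ∑ j : Fin k, ∑ u ∈ Finset.univ.erase j,
          ∫ ω, sampleVar k (Function.update (fun i => X i ω) u (X j ω + r ω)) ∂μ
      = (((k : ℝ) ^ 3 - (k : ℝ) ^ 2 - 2) / (2 * (k : ℝ) * ((k : ℝ) - 1))) * σ ^ 2
    ∧ (((k : ℝ) ^ 3 - (k : ℝ) ^ 2 - 2) / (2 * (k : ℝ) * ((k : ℝ) - 1))) * σ ^ 2
      = ((k : ℝ) / 2 - 1 / ((k : ℝ) * ((k : ℝ) - 1))) * σ ^ 2 := by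
  have hk2 : (2 : ℝ) ≤ (k : ℝ) := by exact_mod_cast hk
  have hk0 : (k : ℝ) ≠ 0 := by linarith
  have hk1 : (k : ℝ) - 1 ≠ 0 := by linarith
  have hXi : ∀ i, Integrable (X i) μ := fun i => (hX i).integrable one_le_two
  have hri : Integrable r μ := hr.integrable one_le_two
  have hA2 : MemLp (fun ω => ∑ i, X i ω) 2 μ :=
    memLp_finset_sum Finset.univ (fun i _ => hX i)
  have hAi : Integrable (fun ω => ∑ i, X i ω) μ :=
    integrable_finset_sum _ (fun i _ => hXi i)
  have hBi : Integrable (fun ω => ∑ i, (X i ω) ^ 2) μ :=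
    integrable_finset_sum _ (fun i _ => (hX i).integrable_sq)
  -- integrability of V (j u) := sampleVar of update by X j
  have hVint : ∀ j u : Fin k, Integrable
      (fun ω => sampleVar k (Function.update (fun i => X i ω) u (X j ω))) μ := by
    intro j u
    have hS2 : MemLp (fun ω => (∑ i, X i ω) - X u ω + X j ω) 2 μ :=
      (hA2.sub (hX u)).add (hX j)
    have h : (fun ω => sampleVar k (Function.update (fun i => X i ω) u (X j ω)))
        = fun ω => (1 / ((k : ℝ) - 1)) * ((∑ i, (X i ω) ^ 2) - (X u ω) ^ 2 + (X j ω) ^ 2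
            - ((∑ i, X i ω) - X u ω + X j ω) ^ 2 / k) := by
      funext ω
      exact ddml_sampleVar_update hk0 (fun i => X i ω) u (X j ω)
    rw [h]
    exact ((((hBi.sub (hX u).integrable_sq).add (hX j).integrable_sq).sub
      (hS2.integrable_sq.div_const _)).const_mul _)
  -- the key per-pair computation
  have key : ∀ j u : Fin k,
      ∫ ω, sampleVar k (Function.update (fun i => X i ω) u (X j ω + r ω)) ∂μ
        = (∫ ω, sampleVar k (Function.update (fun i => X i ω) u (X j ω)) ∂μ)
          + σ ^ 2 * (1 / (k : ℝ)) := by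
    intro j u
    set G : Ω → ℝ := fun ω =>
      (2 / ((k : ℝ) - 1)) * (X j ω - (1 / (k : ℝ)) * ((∑ i, X i ω) - X u ω + X j ω))
      with hG
    have hGint : Integrable G μ :=
      (((hXi j).sub (((hAi.sub (hXi u)).add (hXi j)).const_mul _)).const_mul _)
    have hφ : Measurable (fun v : Fin k → ℝ =>
        (2 / ((k : ℝ) - 1)) * (v j - (1 / (k : ℝ)) * ((∑ i, v i) - v u + v j))) := by
      fun_prop
    have hGr : IndepFun G r μ := hindep.comp hφ measurable_id
    have hGrInt : Integrable (fun ω => G ω * r ω) μ := hGr.integrable_mul hGint hri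
    have hr2Int : Integrable (fun ω => (r ω) ^ 2 * (1 / (k : ℝ))) μ :=
      hr.integrable_sq.mul_const _
    have hdecomp : (fun ω => sampleVar k (Function.update (fun i => X i ω) u (X j ω + r ω)))
        = fun ω => sampleVar k (Function.update (fun i => X i ω) u (X j ω))
            + G ω * r ω + (r ω) ^ 2 * (1 / (k : ℝ)) := by
      funext ω
      exact ddml_var_update_decomp hk0 hk1 (fun i => X i ω) u j (r ω)
    rw [hdecomp]
    have hVG : Integrable (fun ω =>
        sampleVar k (Function.update (fun i => X i ω) u (X j ω)) + G ω * r ω) μ :=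
      (hVint j u).add hGrInt
    have e1 : ∫ ω, (sampleVar k (Function.update (fun i => X i ω) u (X j ω))
          + G ω * r ω + r ω ^ 2 * (1 / (k : ℝ))) ∂μ
        = (∫ ω, (sampleVar k (Function.update (fun i => X i ω) u (X j ω))
            + G ω * r ω) ∂μ) + ∫ ω, r ω ^ 2 * (1 / (k : ℝ)) ∂μ :=
      integral_add hVG hr2Int
    have e2 : ∫ ω, (sampleVar k (Function.update (fun i => X i ω) u (X j ω))
          + G ω * r ω) ∂μ
        = (∫ ω, sampleVar k (Function.update (fun i => X i ω) u (X j ω)) ∂μ)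
          + ∫ ω, G ω * r ω ∂μ :=
      integral_add (hVint j u) hGrInt
    rw [e1, e2]
    have hmul : ∫ ω, G ω * r ω ∂μ = (∫ ω, G ω ∂μ) * ∫ ω, r ω ∂μ :=
      hGr.integral_mul_eq_mul_integral hGint.aestronglyMeasurable hri.aestronglyMeasurable
    rw [hmul, hmean, integral_mul_const, hvar]
    ring
  -- sum over all pairs
  have hcount : ∀ j : Fin k, (Finset.univ.erase j).card = k - 1 := by
    intro j
    rw [Finset.card_erase_of_mem (Finset.mem_univ j), Finset.card_univ, Fintype.card_fin]
  have hsum : ∑ j : Fin k, ∑ u ∈ Finset.univ.erase j,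
        ∫ ω, sampleVar k (Function.update (fun i => X i ω) u (X j ω + r ω)) ∂μ
      = (∑ j : Fin k, ∑ u ∈ Finset.univ.erase j,
          ∫ ω, sampleVar k (Function.update (fun i => X i ω) u (X j ω)) ∂μ)
        + (k : ℝ) * ((k : ℝ) - 1) * (σ ^ 2 * (1 / (k : ℝ))) := by
    have h : ∀ j ∈ Finset.univ, ∑ u ∈ Finset.univ.erase j,
          ∫ ω, sampleVar k (Function.update (fun i => X i ω) u (X j ω + r ω)) ∂μ
        = (∑ u ∈ Finset.univ.erase j,
            ∫ ω, sampleVar k (Function.update (fun i => X i ω) u (X j ω)) ∂μ)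
          + ((k : ℝ) - 1) * (σ ^ 2 * (1 / (k : ℝ))) := by
      intro j _
      have h2 : ∀ u ∈ Finset.univ.erase j,
          ∫ ω, sampleVar k (Function.update (fun i => X i ω) u (X j ω + r ω)) ∂μ
          = (∫ ω, sampleVar k (Function.update (fun i => X i ω) u (X j ω)) ∂μ)
            + σ ^ 2 * (1 / (k : ℝ)) := fun u _ => key j u
      rw [Finset.sum_congr rfl h2, Finset.sum_add_distrib, Finset.sum_const, hcount,
        nsmul_eq_mul]
      have : ((k - 1 : ℕ) : ℝ) = (k : ℝ) - 1 := by
        have : 1 ≤ k := le_trans one_le_two hk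
        push_cast [Nat.cast_sub this]
        ring
      rw [this]
    rw [Finset.sum_congr rfl h, Finset.sum_add_distrib, Finset.sum_const,
      Finset.card_univ, Fintype.card_fin, nsmul_eq_mul]
    ring
  have hswap : ∑ j : Fin k, ∑ u ∈ Finset.univ.erase j,
        ∫ ω, sampleVar k (Function.update (fun i => X i ω) u (X j ω)) ∂μ
      = ((k : ℝ) - 2) * ((k : ℝ) + 1) * (((k : ℝ) / 2) * σ ^ 2) := by
    have h1 : ∀ j ∈ Finset.univ, ∑ u ∈ Finset.univ.erase j,
          ∫ ω, sampleVar k (Function.update (fun i => X i ω) u (X j ω)) ∂μ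
        = ∫ ω, ∑ u ∈ Finset.univ.erase j,
            sampleVar k (Function.update (fun i => X i ω) u (X j ω)) ∂μ := by
      intro j _
      exact (integral_finset_sum _ (fun u _ => hVint j u)).symm
    rw [Finset.sum_congr rfl h1,
      ← integral_finset_sum _ (fun j _ =>
        integrable_finset_sum _ (fun u _ => hVint j u))]
    have h2 : (fun ω => ∑ j : Fin k, ∑ u ∈ Finset.univ.erase j,
          sampleVar k (Function.update (fun i => X i ω) u (X j ω)))
        = fun ω => ((k : ℝ) - 2) * ((k : ℝ) + 1) * sampleVar k (fun i => X i ω) := by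
      funext ω
      exact ddml_sum_pairs hk0 hk1 (fun i => X i ω)
    rw [h2, integral_const_mul, hS]
  constructor
  · rw [hsum, hswap]
    field_simp
    ring
  · field_simp
end

section
/- For all ε > 0, γ > 0, all B¹, B² ∈ ℝ, and all a, a' ∈ [−1, 1]: exp(−(ε/(2γ))·|B¹ − B² + γ·a|) + exp(−(ε/(2γ))·|B² − B¹ + γ·a|) ≤ exp(ε/2)·(exp(−(ε/(2γ))·|B¹ − B² + γ·a'|) + exp(−(ε/(2γ))·|B² − B¹ + γ·a'|)). Equivalently, against an adversary who sees two model instances but does not know which was the pre-image of the update, the privacy loss ε₂ satisfies ε₂ ≤ ε/2 when k = 2. -/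
open Real

lemma ddml_term_bound (ε γ : ℝ) (hε : 0 < ε) (hγ : 0 < γ)
    (y z : ℝ) (h : |y - z| ≤ γ) :
    Real.exp (-(ε / (2 * γ)) * |y|) ≤ Real.exp (ε / 2) * Real.exp (-(ε / (2 * γ)) * |z|) := by
  rw [← Real.exp_add]
  apply Real.exp_le_exp.mpr
  have hc : 0 < ε / (2 * γ) := by positivity
  have h1 : |y| ≥ |z| - γ := by
    have h0 := abs_sub_abs_le_abs_sub z y
    rw [abs_sub_comm] at h0
    linarith
  have h2 : ε / (2 * γ) * γ = ε / 2 := by field_simp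
  nlinarith [mul_le_mul_of_nonneg_left h1 hc.le]

/-- Against an adversary who sees two model instances but not which was the
pre-image of the update, the DDML privacy loss is at most `ε/2`: the mixture of
output densities under gradient `a` is at most `exp(ε/2)` times the mixture
under gradient `a'`. -/
theorem ddml_two_instance_privacy
    (ε γ : ℝ) (hε : 0 < ε) (hγ : 0 < γ)
    (B₁ B₂ : ℝ) (a a' : ℝ)
    (ha : a ∈ Set.Icc (-1 : ℝ) 1) (ha' : a' ∈ Set.Icc (-1 : ℝ) 1) :
    Real.exp (-(ε / (2 * γ)) * |B₁ - B₂ + γ * a|)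
        + Real.exp (-(ε / (2 * γ)) * |B₂ - B₁ + γ * a|)
      ≤ Real.exp (ε / 2) *
        (Real.exp (-(ε / (2 * γ)) * |B₁ - B₂ + γ * a'|)
          + Real.exp (-(ε / (2 * γ)) * |B₂ - B₁ + γ * a'|)) := by
  obtain ⟨ha1, ha2⟩ := ha
  obtain ⟨ha'1, ha'2⟩ := ha'
  rcases le_or_gt (|a - a'|) 1 with hs | hs
  · -- pair straight: |a - a'| ≤ 1
    have hd : |(B₁ - B₂ + γ * a) - (B₁ - B₂ + γ * a')| ≤ γ := by
      have : (B₁ - B₂ + γ * a) - (B₁ - B₂ + γ * a') = γ * (a - a') := by ring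
      rw [this, abs_mul, abs_of_pos hγ]
      nlinarith
    have hd2 : |(B₂ - B₁ + γ * a) - (B₂ - B₁ + γ * a')| ≤ γ := by
      have : (B₂ - B₁ + γ * a) - (B₂ - B₁ + γ * a') = γ * (a - a') := by ring
      rw [this, abs_mul, abs_of_pos hγ]
      nlinarith
    have h1 := ddml_term_bound ε γ hε hγ _ _ hd
    have h2 := ddml_term_bound ε γ hε hγ _ _ hd2
    linarith [mul_add (Real.exp (ε / 2)) (Real.exp (-(ε / (2 * γ)) * |B₁ - B₂ + γ * a'|))
      (Real.exp (-(ε / (2 * γ)) * |B₂ - B₁ + γ * a'|))]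
  · -- then |a + a'| ≤ 1, pair crosswise
    have hs' : |a + a'| ≤ 1 := by
      rcases abs_cases (a - a') with ⟨h, _⟩ | ⟨h, _⟩ <;> rcases abs_cases (a + a') with ⟨h', _⟩ | ⟨h', _⟩ <;>
        linarith
    have hd : |(B₁ - B₂ + γ * a) - (-(B₂ - B₁ + γ * a'))| ≤ γ := by
      have : (B₁ - B₂ + γ * a) - (-(B₂ - B₁ + γ * a')) = γ * (a + a') := by ring
      rw [this, abs_mul, abs_of_pos hγ]
      nlinarith
    have hd2 : |(B₂ - B₁ + γ * a) - (-(B₁ - B₂ + γ * a'))| ≤ γ := by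
      have : (B₂ - B₁ + γ * a) - (-(B₁ - B₂ + γ * a')) = γ * (a + a') := by ring
      rw [this, abs_mul, abs_of_pos hγ]
      nlinarith
    have h1 := ddml_term_bound ε γ hε hγ _ _ hd
    have h2 := ddml_term_bound ε γ hε hγ _ _ hd2
    rw [abs_neg] at h1 h2
    linarith [mul_add (Real.exp (ε / 2)) (Real.exp (-(ε / (2 * γ)) * |B₁ - B₂ + γ * a'|))
      (Real.exp (-(ε / (2 * γ)) * |B₂ - B₁ + γ * a'|))]
end

section
/- For all ε > 0 and γ > 0, the supremum over B¹, B² ∈ ℝ and a, a' ∈ [−1, 1] of the ratio (exp(−(ε/(2γ))·|B¹ − B² + γ·a|) + exp(−(ε/(2γ))·|B² − B¹ + γ·a|)) / (exp(−(ε/(2γ))·|B¹ − B² + γ·a'|) + exp(−(ε/(2γ))·|B² − B¹ + γ·a'|)) equals exp(ε/2), and the supremum is attained at B¹ = B², a = 0, a' = 1. -/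
open Real

private lemma sum_abs_exp (c t u : ℝ) :
    Real.exp (-c * |t + u|) + Real.exp (-c * |t - u|)
      = Real.exp (-c * (|t| + |u|)) + Real.exp (-c * |(|t| - |u|)|) := by
  rcases le_total 0 t with ht | ht <;> rcases le_total 0 u with hu | hu
  · rw [abs_of_nonneg ht, abs_of_nonneg hu, abs_of_nonneg (by linarith : (0:ℝ) ≤ t + u)]
  · rw [abs_of_nonneg ht, abs_of_nonpos hu,
      abs_of_nonneg (by linarith : (0:ℝ) ≤ t - u), sub_neg_eq_add,
      (by ring : t + -u = t - u)]
    exact add_comm _ _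
  · rw [abs_of_nonpos ht, abs_of_nonneg hu,
      abs_of_nonpos (by linarith : t - u ≤ 0),
      (by ring : -t + u = -(t - u)), (by ring : -t - u = -(t + u)), abs_neg]
    exact add_comm _ _
  · rw [abs_of_nonpos ht, abs_of_nonpos hu,
      abs_of_nonpos (by linarith : t + u ≤ 0),
      (by ring : -t + -u = -(t + u)), (by ring : -t - -u = -(t - u)), abs_neg]

private lemma key_ineq (c γ t a a' : ℝ) (hc : 0 < c) (hγ : 0 < γ)
    (ha : |a| ≤ 1) (ha' : |a'| ≤ 1) :
    Real.exp (-c * |t + γ * a|) + Real.exp (-c * |t - γ * a|)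
      ≤ Real.exp (c * γ) *
        (Real.exp (-c * |t + γ * a'|) + Real.exp (-c * |t - γ * a'|)) := by
  rw [sum_abs_exp c t (γ * a), sum_abs_exp c t (γ * a')]
  set u := |γ * a| with hu_def
  set u' := |γ * a'| with hu'_def
  have hu0 : 0 ≤ u := abs_nonneg _
  have hu'0 : 0 ≤ u' := abs_nonneg _
  have hu : u ≤ γ := by
    rw [hu_def, abs_mul, abs_of_pos hγ]
    nlinarith [abs_nonneg a]
  have hu' : u' ≤ γ := by
    rw [hu'_def, abs_mul, abs_of_pos hγ]
    nlinarith [abs_nonneg a']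
  have h1 : Real.exp (-c * (|t| + u)) ≤ Real.exp (c * γ) * Real.exp (-c * (|t| + u')) := by
    rw [← Real.exp_add]
    apply Real.exp_le_exp.mpr
    nlinarith
  have h2 : Real.exp (-c * |(|t| - u)|) ≤ Real.exp (c * γ) * Real.exp (-c * |(|t| - u')|) := by
    rw [← Real.exp_add]
    apply Real.exp_le_exp.mpr
    have habs : |(|t| - u')| - |(|t| - u)| ≤ γ := by
      have h3 : |(|t| - u')| - |(|t| - u)| ≤ |(|t| - u') - (|t| - u)| := by
        have := abs_sub_abs_le_abs_sub (|t| - u') (|t| - u)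
        linarith
      have h4 : |(|t| - u') - (|t| - u)| = |u - u'| := by ring_nf
      have h5 : |u - u'| ≤ γ := by
        rw [abs_sub_le_iff]; constructor <;> linarith
      linarith
    nlinarith
  calc Real.exp (-c * (|t| + u)) + Real.exp (-c * |(|t| - u)|)
      ≤ Real.exp (c * γ) * Real.exp (-c * (|t| + u')) +
        Real.exp (c * γ) * Real.exp (-c * |(|t| - u')|) := by linarith
    _ = _ := by ring

/-- The supremum over `B¹, B², a, a'` of the likelihood ratio seen by the
two-instance adversary equals `exp(ε/2)`, and is attained at
`B¹ = B², a = 0, a' = 1`. -/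
theorem ddml_two_instance_privacy_sup
    (ε γ : ℝ) (hε : 0 < ε) (hγ : 0 < γ) :
    IsGreatest
      {x : ℝ | ∃ B₁ B₂ a a' : ℝ, a ∈ Set.Icc (-1 : ℝ) 1 ∧ a' ∈ Set.Icc (-1 : ℝ) 1 ∧
        x = (Real.exp (-(ε / (2 * γ)) * |B₁ - B₂ + γ * a|)
              + Real.exp (-(ε / (2 * γ)) * |B₂ - B₁ + γ * a|)) /
            (Real.exp (-(ε / (2 * γ)) * |B₁ - B₂ + γ * a'|)
              + Real.exp (-(ε / (2 * γ)) * |B₂ - B₁ + γ * a'|))}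
      (Real.exp (ε / 2))
    ∧ ∀ B : ℝ,
        (Real.exp (-(ε / (2 * γ)) * |B - B + γ * 0|)
            + Real.exp (-(ε / (2 * γ)) * |B - B + γ * 0|)) /
          (Real.exp (-(ε / (2 * γ)) * |B - B + γ * 1|)
            + Real.exp (-(ε / (2 * γ)) * |B - B + γ * 1|))
        = Real.exp (ε / 2) := by
  have hc : 0 < ε / (2 * γ) := by positivity
  have hcg : ε / (2 * γ) * γ = ε / 2 := by field_simp
  have hattain : ∀ B : ℝ,
      (Real.exp (-(ε / (2 * γ)) * |B - B + γ * 0|)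
          + Real.exp (-(ε / (2 * γ)) * |B - B + γ * 0|)) /
        (Real.exp (-(ε / (2 * γ)) * |B - B + γ * 1|)
          + Real.exp (-(ε / (2 * γ)) * |B - B + γ * 1|))
      = Real.exp (ε / 2) := by
    intro B
    have e0 : B - B + γ * 0 = 0 := by ring
    have e1 : B - B + γ * 1 = γ := by ring
    rw [e0, e1, abs_zero, abs_of_pos hγ, mul_zero, Real.exp_zero]
    have : -(ε / (2 * γ)) * γ = -(ε / 2) := by field_simp
    rw [this, Real.exp_neg]
    rw [div_eq_iff (by positivity)]
    field_simp
  refine ⟨⟨⟨0, 0, 0, 1, ?_, ?_, ?_⟩, ?_⟩, hattain⟩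
  · constructor <;> norm_num
  · constructor <;> norm_num
  · have := (hattain 0).symm
    convert this using 3 <;> norm_num
  · rintro x ⟨B₁, B₂, a, a', ha, ha', rfl⟩
    have hD : 0 < Real.exp (-(ε / (2 * γ)) * |B₁ - B₂ + γ * a'|)
        + Real.exp (-(ε / (2 * γ)) * |B₂ - B₁ + γ * a'|) := by positivity
    rw [div_le_iff₀ hD]
    have hkey := key_ineq (ε / (2 * γ)) γ (B₁ - B₂) a a' hc hγ
      (abs_le.mpr ⟨ha.1, ha.2⟩) (abs_le.mpr ⟨ha'.1, ha'.2⟩)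
    have eq1 : B₂ - B₁ + γ * a = -(B₁ - B₂ - γ * a) := by ring
    have eq2 : B₂ - B₁ + γ * a' = -(B₁ - B₂ - γ * a') := by ring
    rw [eq1, eq2, abs_neg, abs_neg]
    calc Real.exp (-(ε / (2 * γ)) * |B₁ - B₂ + γ * a|)
          + Real.exp (-(ε / (2 * γ)) * |B₁ - B₂ - γ * a|)
        ≤ Real.exp (ε / (2 * γ) * γ) *
          (Real.exp (-(ε / (2 * γ)) * |B₁ - B₂ + γ * a'|)
            + Real.exp (-(ε / (2 * γ)) * |B₁ - B₂ - γ * a'|)) := hkey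
      _ = _ := by rw [hcg]
end

section
/- For every integer k ≥ 2, all ε > 0, γ > 0, every vector B : Fin k → ℝ, and all a, a' ∈ [−1, 1]: Σ_{(i,j), i ≠ j} exp(−(ε/(2γ))·|B i − B j + γ·a|) ≤ exp(ε/2) · Σ_{(i,j), i ≠ j} exp(−(ε/(2γ))·|B i − B j + γ·a'|), where both sums range over all ordered pairs of distinct indices in Fin k. (This is the k-instance generalization showing the privacy loss against an adversary who sees all k model instances but not the pre-image is at most ε/2.) -/
open Real

/-- The `k`-instance generalization: against an adversary who sees all `k`
model instances but not the pre-image of the update, the privacy loss is at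
most `ε/2`. -/
theorem ddml_k_instance_privacy
    (k : ℕ) (hk : 2 ≤ k) (ε γ : ℝ) (hε : 0 < ε) (hγ : 0 < γ)
    (B : Fin k → ℝ) (a a' : ℝ)
    (ha : a ∈ Set.Icc (-1 : ℝ) 1) (ha' : a' ∈ Set.Icc (-1 : ℝ) 1) :
    ∑ i : Fin k, ∑ j ∈ Finset.univ.erase i,
        Real.exp (-(ε / (2 * γ)) * |B i - B j + γ * a|)
      ≤ Real.exp (ε / 2) *
        ∑ i : Fin k, ∑ j ∈ Finset.univ.erase i,
          Real.exp (-(ε / (2 * γ)) * |B i - B j + γ * a'|) := by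
  set c : ℝ := ε / (2 * γ) with hc
  have hcpos : 0 < c := by positivity
  set F : ℝ → ℝ := fun t => ∑ i : Fin k, ∑ j ∈ Finset.univ.erase i,
      Real.exp (-c * |B i - B j + t|) with hF
  -- F is even
  have heven : ∀ t : ℝ, F (-t) = F t := by
    intro t
    have hswap : ∀ h : Fin k → Fin k → ℝ,
        (∑ i : Fin k, ∑ j ∈ Finset.univ.erase i, h i j)
          = ∑ i : Fin k, ∑ j ∈ Finset.univ.erase i, h j i := by
      intro h
      have e1 : ∀ (g : Fin k → Fin k → ℝ),
          (∑ i : Fin k, ∑ j ∈ Finset.univ.erase i, g i j)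
            = ∑ i : Fin k, ∑ j : Fin k, if j ≠ i then g i j else 0 := by
        intro g
        refine Finset.sum_congr rfl fun i _ => ?_
        rw [← Finset.sum_filter]
        congr 1
        ext j
        simp [Finset.mem_erase]
      rw [e1, e1]
      rw [Finset.sum_comm]
      refine Finset.sum_congr rfl fun i _ => Finset.sum_congr rfl fun j _ => ?_
      simp [ne_comm]
    simp only [hF]
    rw [hswap (fun i j => Real.exp (-c * |B i - B j + -t|))]
    refine Finset.sum_congr rfl fun i _ => Finset.sum_congr rfl fun j _ => ?_
    congr 1
    rw [← abs_neg]
    ring_nf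
  have hFabs : ∀ t : ℝ, F (γ * t) = F (γ * |t|) := by
    intro t
    rcases abs_choice t with h | h
    · rw [h]
    · rw [h, mul_neg, heven]
  -- the Lipschitz-type bound
  have hkey : ∀ s t : ℝ, |s - t| ≤ γ → F s ≤ Real.exp (ε / 2) * F t := by
    intro s t hst
    simp only [hF]
    rw [Finset.mul_sum]
    refine Finset.sum_le_sum fun i _ => ?_
    rw [Finset.mul_sum]
    refine Finset.sum_le_sum fun j _ => ?_
    rw [← Real.exp_add]
    apply Real.exp_le_exp.mpr
    have h1 : |B i - B j + t| - |B i - B j + s| ≤ |s - t| := by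
      have := abs_sub_abs_le_abs_sub (B i - B j + t) (B i - B j + s)
      calc |B i - B j + t| - |B i - B j + s| ≤ |(B i - B j + t) - (B i - B j + s)| := this
        _ = |t - s| := by ring_nf
        _ = |s - t| := abs_sub_comm t s
    have hcg : c * γ = ε / 2 := by
      field_simp [hc]
      rw [hc, div_mul_eq_mul_div, div_mul_eq_mul_div, div_eq_iff (by positivity)]; ring
    nlinarith [mul_le_mul_of_nonneg_left hst hcpos.le,
      mul_le_mul_of_nonneg_left h1 hcpos.le]
  have habs : abs (γ * |a| - γ * |a'|) ≤ γ := by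
    rw [← mul_sub, abs_mul, abs_of_pos hγ]
    have h1 : |a| ≤ 1 := abs_le.mpr ⟨ha.1, ha.2⟩
    have h2 : |a'| ≤ 1 := abs_le.mpr ⟨ha'.1, ha'.2⟩
    have h3 : abs (|a| - |a'|) ≤ 1 := by
      rw [abs_sub_le_iff]
      constructor <;> nlinarith [abs_nonneg a, abs_nonneg a']
    nlinarith
  have := hkey (γ * |a|) (γ * |a'|) habs
  rw [← hFabs a, ← hFabs a'] at this
  exact this
end

section
/- For all ε > 0, γ > 0, all gradients a, a' ∈ [−1, 1], and all y ∈ ℝ: exp(−(ε/(2γ))·|y + γ·a|) ≤ exp(ε) · exp(−(ε/(2γ))·|y + γ·a'|). That is, the output density of the DDML client update computed with gradient a is pointwise at most exp(ε) times the output density computed with gradient a', so the client update is ε-differentially private against an adversary who observes both the model instance sent to the client and the updated model instance. -/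
open Real

/-- The DDML client update is `ε`-differentially private against an adversary
who observes both the model sent to the client and the updated model: the
output density under gradient `a` is pointwise at most `exp ε` times the
output density under gradient `a'`. -/
theorem ddml_local_dp
    (ε γ : ℝ) (hε : 0 < ε) (hγ : 0 < γ)
    (a a' : ℝ) (ha : a ∈ Set.Icc (-1 : ℝ) 1) (ha' : a' ∈ Set.Icc (-1 : ℝ) 1)
    (y : ℝ) :
    Real.exp (-(ε / (2 * γ)) * |y + γ * a|)
      ≤ Real.exp ε * Real.exp (-(ε / (2 * γ)) * |y + γ * a'|) := by
  rw [← Real.exp_add, Real.exp_le_exp]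
  have h1 : |y + γ * a'| - |y + γ * a| ≤ 2 * γ := by
    have := abs_sub_abs_le_abs_sub (y + γ * a') (y + γ * a)
    have h2 : |(y + γ * a') - (y + γ * a)| = γ * |a' - a| := by
      rw [show (y + γ * a') - (y + γ * a) = γ * (a' - a) by ring,
        abs_mul, abs_of_pos hγ]
    have h3 : |a' - a| ≤ 2 := by
      obtain ⟨h4, h5⟩ := ha; obtain ⟨h6, h7⟩ := ha'
      rw [abs_sub_le_iff]; constructor <;> linarith
    nlinarith
  have hpos : 0 < ε / (2 * γ) := div_pos hε (by linarith)
  nlinarith [mul_le_mul_of_nonneg_left h1 hpos.le,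
    mul_pos hε hγ, (div_mul_cancel₀ ε (show (2:ℝ)*γ ≠ 0 by positivity))]
end

section
/- For all T, γ, ε, L > 0 and with sensitivity w = √2·γ, the threshold x* = ε²·(w² + √(w⁴ + 16T·(γ²/ε²)·w²·L))/(8Tγ²), which simplifies to x* = ε²·(1 + √(1 + 8TL/ε²))/(4T), satisfies the two-sided bound ε·√(L/(2T)) ≤ x* ≤ ε·√(L/(2T)) + ε²/(2T). In particular, for large T the privacy loss against the opportunistic adversary is approximately ε_T ≈ (ε/√(2T))·√L, an amplification by a factor of order √T over the per-update privacy loss ε. -/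
open Real

/-- With sensitivity `w = √2·γ`, the positive root
`x* = ε²(w² + √(w⁴ + 16T(γ²/ε²)w²L))/(8Tγ²)` of the privacy quadratic
simplifies to `x* = ε²(1 + √(1 + 8TL/ε²))/(4T)` and satisfies the two-sided
bound `ε√(L/(2T)) ≤ x* ≤ ε√(L/(2T)) + ε²/(2T)`: the privacy loss against the
opportunistic adversary is approximately `(ε/√(2T))·√L` for large `T`. -/
theorem ddml_opportunistic_privacy_bound
    (T γ ε L w : ℝ) (hT : 0 < T) (hγ : 0 < γ) (hε : 0 < ε) (hL : 0 < L)
    (hw : w = Real.sqrt 2 * γ) :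
    ε ^ 2 * (w ^ 2 + Real.sqrt (w ^ 4 + 16 * T * (γ ^ 2 / ε ^ 2) * w ^ 2 * L))
        / (8 * T * γ ^ 2)
      = ε ^ 2 * (1 + Real.sqrt (1 + 8 * T * L / ε ^ 2)) / (4 * T)
    ∧ ε * Real.sqrt (L / (2 * T))
        ≤ ε ^ 2 * (w ^ 2 + Real.sqrt (w ^ 4 + 16 * T * (γ ^ 2 / ε ^ 2) * w ^ 2 * L))
            / (8 * T * γ ^ 2)
    ∧ ε ^ 2 * (w ^ 2 + Real.sqrt (w ^ 4 + 16 * T * (γ ^ 2 / ε ^ 2) * w ^ 2 * L))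
            / (8 * T * γ ^ 2)
        ≤ ε * Real.sqrt (L / (2 * T)) + ε ^ 2 / (2 * T) := by
  have hw2 : w ^ 2 = 2 * γ ^ 2 := by
    rw [hw, mul_pow, sq_sqrt (by norm_num : (2:ℝ) ≥ 0)]
  have ha : (0:ℝ) ≤ 8 * T * L / ε ^ 2 := by positivity
  -- simplify the inner sqrt
  have harg : w ^ 4 + 16 * T * (γ ^ 2 / ε ^ 2) * w ^ 2 * L
      = (2 * γ ^ 2) ^ 2 * (1 + 8 * T * L / ε ^ 2) := by
    have hw4 : w ^ 4 = (w ^ 2) ^ 2 := by ring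
    rw [hw4, hw2]; field_simp; ring
  have hsq : Real.sqrt (w ^ 4 + 16 * T * (γ ^ 2 / ε ^ 2) * w ^ 2 * L)
      = 2 * γ ^ 2 * Real.sqrt (1 + 8 * T * L / ε ^ 2) := by
    rw [harg, Real.sqrt_mul (by positivity), Real.sqrt_sq (by positivity)]
  have heq : ε ^ 2 * (w ^ 2 + Real.sqrt (w ^ 4 + 16 * T * (γ ^ 2 / ε ^ 2) * w ^ 2 * L))
        / (8 * T * γ ^ 2)
      = ε ^ 2 * (1 + Real.sqrt (1 + 8 * T * L / ε ^ 2)) / (4 * T) := by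
    rw [hsq, hw2]; field_simp; ring
  -- rewrite ε√(L/(2T)) in terms of √(8TL/ε²)
  have hkey : ε * Real.sqrt (L / (2 * T))
      = ε ^ 2 * Real.sqrt (8 * T * L / ε ^ 2) / (4 * T) := by
    have h1 : 8 * T * L / ε ^ 2 = (L / (2 * T)) * (4 * T / ε) ^ 2 := by
      field_simp; ring
    rw [h1, Real.sqrt_mul (by positivity), Real.sqrt_sq (by positivity)]
    field_simp
  have hs := Real.sqrt_nonneg (8 * T * L / ε ^ 2)
  have hlow : Real.sqrt (8 * T * L / ε ^ 2) ≤ Real.sqrt (1 + 8 * T * L / ε ^ 2) :=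
    Real.sqrt_le_sqrt (by linarith)
  have hup : Real.sqrt (1 + 8 * T * L / ε ^ 2)
      ≤ 1 + Real.sqrt (8 * T * L / ε ^ 2) := by
    have h2 : (1:ℝ) + 8 * T * L / ε ^ 2 ≤ (1 + Real.sqrt (8 * T * L / ε ^ 2)) ^ 2 := by
      nlinarith [Real.sq_sqrt ha, Real.sqrt_nonneg (8 * T * L / ε ^ 2)]
    have h3 := Real.sqrt_le_sqrt h2
    rwa [Real.sqrt_sq (by positivity)] at h3
  refine ⟨heq, ?_, ?_⟩
  · rw [heq, hkey]
    apply div_le_div_of_nonneg_right ?_ (by positivity) |>.trans_eq rfl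
    nlinarith
  · rw [heq, hkey]
    rw [div_add_div _ _ (by positivity : (4:ℝ)*T ≠ 0) (by positivity : (2:ℝ)*T ≠ 0),
      div_le_div_iff₀ (by positivity) (by positivity)]
    nlinarith [mul_le_mul_of_nonneg_left hup (show (0:ℝ) ≤ 8*T^2*ε^2 by positivity)]
end
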